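/- Let s ≥ 2 and let R = {0,…,s−1} × {0,…,s} ⊆ ℤ² be the s × (s+1) rectangle (the horizontal/vertical block for (1,s)-tilings). Then R has exactly three (1,s)-tilings: the all-unit tiling {(q,1) : q ∈ R}; the tiling with one s×s tile at (0,0) together with s unit tiles in the top row; and the tiling with one s×s tile at (0,1) together with s unit tiles in the bottom row. -/

import Mathlib

/-
The area s² of an s×s tile exceeds half the area s(s+1) of the rectangle, so a (1,s)-tiling has
at most one such tile, and inside the s×(s+1) rectangle it can only sit at (0,0) or (0,1). A
(1,s)-tiling is determined by its s×s tiles, since the unit tiles are exactly the cells they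
leave uncovered; so the three candidate tilings are the only ones.
-/

open Finset

/-- The k×k square of cells with lower-left corner `p`. -/
def sqCells (p : ℤ × ℤ) (k : ℕ) : Finset (ℤ × ℤ) :=
  (Finset.range k ×ˢ Finset.range k).image fun ij => (p.1 + ij.1, p.2 + ij.2)

/-- `T` is an (m,s)-tiling of the finite region `R`. -/
def IsTiling (m s : ℕ) (R : Finset (ℤ × ℤ)) (T : Finset ((ℤ × ℤ) × ℕ)) : Prop :=
  (∀ t ∈ T, t.2 = m ∨ t.2 = s) ∧
  (∀ t ∈ T, ∀ t' ∈ T, t ≠ t' → Disjoint (sqCells t.1 t.2) (sqCells t'.1 t'.2)) ∧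
  T.biUnion (fun t => sqCells t.1 t.2) = R

/-- The a×b rectangular region in ℤ². -/
def rectRegion (a b : ℕ) : Finset (ℤ × ℤ) :=
  (Finset.range a ×ˢ Finset.range b).image fun ij => ((ij.1 : ℤ), (ij.2 : ℤ))

/-- The all-unit tiling of the s×(s+1) rectangle. -/
def blockUnits (s : ℕ) : Finset ((ℤ × ℤ) × ℕ) :=
  (rectRegion s (s + 1)).image fun q => (q, 1)

/-- One s×s tile at (0,0) with s unit tiles in the top row. -/
def blockBig0 (s : ℕ) : Finset ((ℤ × ℤ) × ℕ) :=
  insert (((0 : ℤ), (0 : ℤ)), s)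
    ((Finset.range s).image fun i : ℕ => ((((i : ℕ) : ℤ), (s : ℤ)), 1))

/-- One s×s tile at (0,1) with s unit tiles in the bottom row. -/
def blockBig1 (s : ℕ) : Finset ((ℤ × ℤ) × ℕ) :=
  insert (((0 : ℤ), (1 : ℤ)), s)
    ((Finset.range s).image fun i : ℕ => ((((i : ℕ) : ℤ), (0 : ℤ)), 1))

lemma mem_sqCells {p q : ℤ × ℤ} {k : ℕ} :
    q ∈ sqCells p k ↔ p.1 ≤ q.1 ∧ q.1 < p.1 + k ∧ p.2 ≤ q.2 ∧ q.2 < p.2 + k := by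
  simp only [sqCells, mem_image, mem_product, mem_range, Prod.exists]
  constructor
  · rintro ⟨i, j, ⟨hi, hj⟩, rfl⟩
    simp only
    omega
  · rintro ⟨h1, h2, h3, h4⟩
    refine ⟨(q.1 - p.1).toNat, (q.2 - p.2).toNat, ⟨by omega, by omega⟩, ?_⟩
    ext <;> simp only <;> omega

lemma mem_rectRegion {q : ℤ × ℤ} {a b : ℕ} :
    q ∈ rectRegion a b ↔ 0 ≤ q.1 ∧ q.1 < a ∧ 0 ≤ q.2 ∧ q.2 < b := by
  simp only [rectRegion, mem_image, mem_product, mem_range, Prod.exists]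
  constructor
  · rintro ⟨i, j, ⟨hi, hj⟩, rfl⟩
    omega
  · rintro ⟨h1, h2, h3, h4⟩
    refine ⟨q.1.toNat, q.2.toNat, ⟨by omega, by omega⟩, ?_⟩
    ext <;> simp only <;> omega

lemma sqCells_one (p : ℤ × ℤ) : sqCells p 1 = {p} := by
  ext q
  simp only [mem_sqCells, mem_singleton, Prod.ext_iff, Nat.cast_one]
  omega

lemma card_sqCells (p : ℤ × ℤ) (k : ℕ) : #(sqCells p k) = k * k := by
  rw [sqCells, card_image_of_injective, card_product, card_range]
  intro a b h
  simp only [Prod.mk.injEq] at h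
  ext <;> omega

lemma card_rectRegion (a b : ℕ) : #(rectRegion a b) = a * b := by
  rw [rectRegion, card_image_of_injective, card_product, card_range, card_range]
  intro x y h
  simp only [Prod.mk.injEq, Nat.cast_inj] at h
  ext <;> omega

lemma sqCells_subset_rectRegion_iff {p : ℤ × ℤ} {k a b : ℕ} (hk : 0 < k) :
    sqCells p k ⊆ rectRegion a b ↔ 0 ≤ p.1 ∧ p.1 + k ≤ a ∧ 0 ≤ p.2 ∧ p.2 + k ≤ b := by
  constructor
  · intro h
    have corner := mem_rectRegion.1 (h ((mem_sqCells (p := p) (q := p)).2 (by omega)))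
    have opposite := mem_rectRegion.1 (h ((mem_sqCells (p := p)
      (q := (p.1 + (k - 1 : ℕ), p.2 + (k - 1 : ℕ)))).2 (by omega)))
    omega
  · intro h q hq
    rw [mem_sqCells] at hq
    rw [mem_rectRegion]
    omega

namespace IsTiling

variable {m s : ℕ} {R : Finset (ℤ × ℤ)} {T : Finset ((ℤ × ℤ) × ℕ)}

lemma sqCells_subset (hT : IsTiling m s R T) {t : (ℤ × ℤ) × ℕ} (ht : t ∈ T) :
    sqCells t.1 t.2 ⊆ R := by
  rw [← hT.2.2]
  exact fun q hq => mem_biUnion.2 ⟨t, ht, hq⟩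

lemma exists_mem_sqCells (hT : IsTiling m s R T) {q : ℤ × ℤ} (hq : q ∈ R) :
    ∃ t ∈ T, q ∈ sqCells t.1 t.2 :=
  mem_biUnion.1 (hT.2.2 ▸ hq)

lemma sum_area (hT : IsTiling m s R T) : ∑ t ∈ T, t.2 * t.2 = #R := by
  rw [← hT.2.2, card_biUnion hT.2.1]
  exact sum_congr rfl fun t _ => (card_sqCells t.1 t.2).symm

lemma card_filter_mul_le (hT : IsTiling m s R T) (k : ℕ) :
    #(T.filter (·.2 = k)) * (k * k) ≤ #R := by
  calc #(T.filter (·.2 = k)) * (k * k) = ∑ t ∈ T.filter (·.2 = k), t.2 * t.2 :=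
        (sum_const_nat fun t ht => by rw [(mem_filter.1 ht).2]).symm
    _ ≤ ∑ t ∈ T, t.2 * t.2 := sum_le_sum_of_subset (filter_subset _ _)
    _ = #R := hT.sum_area

/-- A unit tile of `T` cannot meet a big tile of `T'`, since that big tile also lies in `T`. -/
lemma subset_of_filter_eq (hs : s ≠ 1) {T' : Finset ((ℤ × ℤ) × ℕ)} (hT : IsTiling 1 s R T)
    (hT' : IsTiling 1 s R T') (h : T.filter (·.2 = s) = T'.filter (·.2 = s)) : T ⊆ T' := by
  intro t ht
  rcases hT.1 t ht with hunit | hbig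
  · obtain ⟨t', ht', hcell⟩ := hT'.exists_mem_sqCells (hT.sqCells_subset ht (by
      rw [hunit, sqCells_one]; exact mem_singleton_self t.1))
    rcases hT'.1 t' ht' with hunit' | hbig'
    · rw [hunit', sqCells_one, mem_singleton] at hcell
      rwa [Prod.ext hcell (hunit.trans hunit'.symm)]
    · have ht'T : t' ∈ T := (mem_filter.1 (h ▸ mem_filter.2 ⟨ht', hbig'⟩)).1
      have hne : t ≠ t' := fun heq => hs (by rw [← hbig', ← heq, hunit])
      refine absurd (hT.2.1 t ht t' ht'T hne) (not_disjoint_iff.2 ⟨t.1, ?_, hcell⟩)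
      rw [hunit, sqCells_one]
      exact mem_singleton_self t.1
  · exact (mem_filter.1 (h ▸ mem_filter.2 ⟨ht, hbig⟩)).1

lemma eq_of_filter_eq (hs : s ≠ 1) {T' : Finset ((ℤ × ℤ) × ℕ)} (hT : IsTiling 1 s R T)
    (hT' : IsTiling 1 s R T') (h : T.filter (·.2 = s) = T'.filter (·.2 = s)) : T = T' :=
  (hT.subset_of_filter_eq hs hT' h).antisymm (hT'.subset_of_filter_eq hs hT h.symm)

end IsTiling

lemma isTiling_image_units (s : ℕ) (R : Finset (ℤ × ℤ)) :
    IsTiling 1 s R (R.image fun q => (q, 1)) := by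
  refine ⟨?_, ?_, ?_⟩
  · simp only [mem_image]
    rintro _ ⟨q, _, rfl⟩
    exact Or.inl rfl
  · simp only [mem_image]
    rintro _ ⟨q, _, rfl⟩ _ ⟨q', _, rfl⟩ hne
    rw [sqCells_one, sqCells_one, disjoint_singleton]
    exact fun h => hne (by rw [show q = q' from h])
  · ext q
    simp only [mem_biUnion, mem_image]
    constructor
    · rintro ⟨_, ⟨q', hq', rfl⟩, hq⟩
      rw [sqCells_one, mem_singleton] at hq
      rwa [hq]
    · exact fun hq => ⟨(q, 1), ⟨q, hq, rfl⟩, by rw [sqCells_one]; exact mem_singleton_self q⟩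

def squareWithRow (s : ℕ) (c r : ℤ) : Finset ((ℤ × ℤ) × ℕ) :=
  insert (((0 : ℤ), c), s) ((range s).image fun i : ℕ => (((i : ℤ), r), 1))

lemma mem_squareWithRow {s : ℕ} {c r : ℤ} {t : (ℤ × ℤ) × ℕ} :
    t ∈ squareWithRow s c r ↔ t = (((0 : ℤ), c), s) ∨ ∃ i < s, t = (((i : ℤ), r), 1) := by
  simp [squareWithRow, eq_comm]

lemma isTiling_squareWithRow (s : ℕ) {c r : ℤ} (h : c = 0 ∧ r = s ∨ c = 1 ∧ r = 0) :
    IsTiling 1 s (rectRegion s (s + 1)) (squareWithRow s c r) := by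
  refine ⟨?_, ?_, ?_⟩
  · intro t ht
    rcases mem_squareWithRow.1 ht with rfl | ⟨i, hi, rfl⟩
    exacts [Or.inr rfl, Or.inl rfl]
  · intro t ht t' ht' hne
    rcases mem_squareWithRow.1 ht with rfl | ⟨i, hi, rfl⟩ <;>
      rcases mem_squareWithRow.1 ht' with rfl | ⟨j, hj, rfl⟩
    · exact absurd rfl hne
    · rw [sqCells_one, disjoint_singleton_right, mem_sqCells]
      dsimp only
      omega
    · rw [sqCells_one, disjoint_singleton_left, mem_sqCells]
      dsimp only
      omega
    · rw [sqCells_one, sqCells_one, disjoint_singleton]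
      intro hij
      exact hne (by simp_all)
  · ext q
    simp only [mem_biUnion, mem_rectRegion]
    constructor
    · rintro ⟨t, ht, hq⟩
      rcases mem_squareWithRow.1 ht with rfl | ⟨i, hi, rfl⟩
      · rw [mem_sqCells] at hq
        dsimp only at hq
        omega
      · rw [sqCells_one, mem_singleton] at hq
        subst hq
        dsimp only
        omega
    · rintro ⟨h1, h2, h3, h4⟩
      by_cases hrow : q.2 = r
      · refine ⟨((q.1, r), 1), mem_squareWithRow.2 (Or.inr ⟨q.1.toNat, by omega, ?_⟩), ?_⟩
        · rw [Int.toNat_of_nonneg h1]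
        · rw [sqCells_one, ← hrow]
          exact mem_singleton_self q
      · exact ⟨(((0 : ℤ), c), s), mem_squareWithRow.2 (Or.inl rfl),
          mem_sqCells.2 (by dsimp only; omega)⟩

lemma filter_squareWithRow {s : ℕ} (hs : s ≠ 1) (c r : ℤ) :
    (squareWithRow s c r).filter (·.2 = s) = {(((0 : ℤ), c), s)} := by
  ext t
  simp only [mem_filter, mem_squareWithRow, mem_singleton]
  constructor
  · rintro ⟨rfl | ⟨i, -, rfl⟩, hsize⟩
    exacts [rfl, absurd hsize.symm hs]
  · rintro rfl
    exact ⟨Or.inl rfl, rfl⟩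

lemma filter_image_units {s : ℕ} (hs : s ≠ 1) (R : Finset (ℤ × ℤ)) :
    (R.image fun q => (q, 1)).filter (·.2 = s) = ∅ := by
  ext t
  simp only [mem_filter, mem_image, notMem_empty, iff_false]
  rintro ⟨⟨q, -, rfl⟩, hsize⟩
  exact hs hsize.symm

/-- Two s×s squares do not fit into the s×(s+1) rectangle, and one fits only flush left at
height 0 or 1. -/
lemma filter_eq_of_isTiling_block {s : ℕ} (hs : 2 ≤ s) {T : Finset ((ℤ × ℤ) × ℕ)}
    (hT : IsTiling 1 s (rectRegion s (s + 1)) T) :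
    T.filter (·.2 = s) = ∅ ∨ T.filter (·.2 = s) = {(((0 : ℤ), 0), s)} ∨
      T.filter (·.2 = s) = {(((0 : ℤ), 1), s)} := by
  have hcard : #(T.filter (·.2 = s)) ≤ 1 := by
    have harea := hT.card_filter_mul_le s
    rw [card_rectRegion] at harea
    by_contra! htwo
    nlinarith
  rcases card_le_one_iff_subset_singleton.1 hcard with ⟨t, hsub⟩
  rcases subset_singleton_iff.1 hsub with hempty | hsingle
  · exact Or.inl hempty
  · have ht := mem_filter.1 (hsingle ▸ mem_singleton_self t)
    have hpos := (sqCells_subset_rectRegion_iff (by omega)).1 (hT.sqCells_subset ht.1)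
    rw [ht.2] at hpos
    obtain ⟨⟨x, y⟩, k⟩ := t
    obtain rfl : k = s := ht.2
    obtain rfl : x = 0 := by simp only at hpos; omega
    rcases (by simp only at hpos; omega : y = 0 ∨ y = 1) with rfl | rfl
    exacts [Or.inr (Or.inl hsingle), Or.inr (Or.inr hsingle)]

/-- The s×(s+1) rectangle (the horizontal/vertical block for (1,s)-tilings) has exactly
three (1,s)-tilings: the all-unit tiling, the tiling with one s×s tile at (0,0) and s
unit tiles in the top row, and the tiling with one s×s tile at (0,1) and s unit tiles in
the bottom row. -/
theorem block_has_three_tilings (s : ℕ) (hs : 2 ≤ s) :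
    {T | IsTiling 1 s (rectRegion s (s + 1)) T} =
      {blockUnits s, blockBig0 s, blockBig1 s} := by
  have hunits : IsTiling 1 s (rectRegion s (s + 1)) (blockUnits s) := isTiling_image_units _ _
  have hbig0 : IsTiling 1 s (rectRegion s (s + 1)) (blockBig0 s) :=
    isTiling_squareWithRow s (Or.inl ⟨rfl, rfl⟩)
  have hbig1 : IsTiling 1 s (rectRegion s (s + 1)) (blockBig1 s) :=
    isTiling_squareWithRow s (Or.inr ⟨rfl, rfl⟩)
  have hs1 : s ≠ 1 := by omega
  ext T
  simp only [Set.mem_ofPred_eq, Set.mem_insert_iff, Set.mem_singleton_iff]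
  constructor
  · intro hT
    rcases filter_eq_of_isTiling_block hs hT with h | h | h
    · exact Or.inl (hT.eq_of_filter_eq hs1 hunits (h.trans (filter_image_units hs1 _).symm))
    · exact Or.inr (Or.inl
        (hT.eq_of_filter_eq hs1 hbig0 (h.trans (filter_squareWithRow hs1 0 s).symm)))
    · exact Or.inr (Or.inr
        (hT.eq_of_filter_eq hs1 hbig1 (h.trans (filter_squareWithRow hs1 1 0).symm)))
  · rintro (rfl | rfl | rfl)
    exacts [hunits, hbig0, hbig1]
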